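/- Let ϵ ≥ 0 and let e = (1,…,1) ∈ ℝ^p. Let U ⊆ ℝ^p be a set satisfying Y⋄ ⊆ U ⊆ Y⋄ + ϵ·B, where B is the closed Euclidean unit ball of ℝ^p. Then WMin Y⋄ ⊆ U_ε ∩ Y⋄ ⊆ (Y⋄)_ε, where for a set Q ⊆ ℝ^p, Q_ε := {q ∈ Q : (q − ϵe − int ℝ₊^p) ∩ Q = ∅}. -/

import Mathlib

open Pointwise

/-- The set of weakly nondominated points of `Q ⊆ ℝ^p`. -/
def wMinSet {p : ℕ} (Q : Set (EuclideanSpace ℝ (Fin p))) : Set (EuclideanSpace ℝ (Fin p)) :=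
  {q ∈ Q | ¬ ∃ q' ∈ Q, ∀ j, q' j < q j}

/-- The set `Q_ε` of weakly ε-nondominated points of `Q`
(with `ε = ϵ·e`, `e = (1,…,1)`): `{q ∈ Q ∣ (q − ϵe − int ℝ₊^p) ∩ Q = ∅}`. -/
def wEpsSet {p : ℕ} (eps : ℝ) (Q : Set (EuclideanSpace ℝ (Fin p))) :
    Set (EuclideanSpace ℝ (Fin p)) :=
  {q ∈ Q | ¬ ∃ q' ∈ Q, ∀ j, q' j < q j - eps}

section

variable {p : ℕ} {eps : ℝ} {Q U : Set (EuclideanSpace ℝ (Fin p))}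

lemma exists_le_add_of_mem_add_smul_closedBall (heps : 0 ≤ eps) {u : EuclideanSpace ℝ (Fin p)}
    (hu : u ∈ Q + eps • Metric.closedBall (0 : EuclideanSpace ℝ (Fin p)) 1) :
    ∃ q ∈ Q, ∀ j, q j ≤ u j + eps := by
  obtain ⟨q, hq, _, ⟨c, hc, rfl⟩, rfl⟩ := hu
  refine ⟨q, hq, fun j => ?_⟩
  have hcj : |c j| ≤ 1 := by
    simpa using (PiLp.norm_apply_le c j).trans (mem_closedBall_zero_iff.mp hc)
  have : -eps ≤ eps * c j := by nlinarith [neg_abs_le (c j)]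
  simp only [PiLp.add_apply, PiLp.smul_apply, smul_eq_mul]
  linarith

lemma wMinSet_subset_wEpsSet (heps : 0 ≤ eps) (hQU : Q ⊆ U)
    (hUQ : U ⊆ Q + eps • Metric.closedBall (0 : EuclideanSpace ℝ (Fin p)) 1) :
    wMinSet Q ⊆ wEpsSet eps U := by
  rintro y ⟨hyQ, hymin⟩
  refine ⟨hQU hyQ, ?_⟩
  rintro ⟨u, huU, hu⟩
  obtain ⟨q, hqQ, hq⟩ := exists_le_add_of_mem_add_smul_closedBall heps (hUQ huU)
  exact hymin ⟨q, hqQ, fun j => by linarith [hq j, hu j]⟩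

lemma wEpsSet_inter_subset_wEpsSet (hQU : Q ⊆ U) : wEpsSet eps U ∩ Q ⊆ wEpsSet eps Q :=
  fun _ ⟨⟨_, hy⟩, hyQ⟩ => ⟨hyQ, fun ⟨q, hqQ, hq⟩ => hy ⟨q, hQU hqQ, hq⟩⟩

end

theorem stmt_16_general {n p : ℕ}
    (S : Set (EuclideanSpace ℝ (Fin n)))
    (f : EuclideanSpace ℝ (Fin n) → EuclideanSpace ℝ (Fin p))
    (M : EuclideanSpace ℝ (Fin p))
    (eps : ℝ) (heps : 0 ≤ eps)
    (U : Set (EuclideanSpace ℝ (Fin p)))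
    -- `Y⋄ ⊆ U ⊆ Y⋄ + ϵ·B` with `B` the closed Euclidean unit ball
    (hU1 : ({y : EuclideanSpace ℝ (Fin p) | ∃ x ∈ S, ∀ j, f x j ≤ y j} ∩
        {y : EuclideanSpace ℝ (Fin p) | ∀ j, y j ≤ M j}) ⊆ U)
    (hU2 : U ⊆ ({y : EuclideanSpace ℝ (Fin p) | ∃ x ∈ S, ∀ j, f x j ≤ y j} ∩
        {y : EuclideanSpace ℝ (Fin p) | ∀ j, y j ≤ M j}) + eps • Metric.closedBall (0 : EuclideanSpace ℝ (Fin p)) 1) :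
    wMinSet ({y : EuclideanSpace ℝ (Fin p) | ∃ x ∈ S, ∀ j, f x j ≤ y j} ∩
        {y : EuclideanSpace ℝ (Fin p) | ∀ j, y j ≤ M j}) ⊆
      wEpsSet eps U ∩ ({y : EuclideanSpace ℝ (Fin p) | ∃ x ∈ S, ∀ j, f x j ≤ y j} ∩
        {y : EuclideanSpace ℝ (Fin p) | ∀ j, y j ≤ M j}) ∧
    wEpsSet eps U ∩ ({y : EuclideanSpace ℝ (Fin p) | ∃ x ∈ S, ∀ j, f x j ≤ y j} ∩
        {y : EuclideanSpace ℝ (Fin p) | ∀ j, y j ≤ M j}) ⊆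
      wEpsSet eps ({y : EuclideanSpace ℝ (Fin p) | ∃ x ∈ S, ∀ j, f x j ≤ y j} ∩
        {y : EuclideanSpace ℝ (Fin p) | ∀ j, y j ≤ M j}) :=
  ⟨fun _ hy => ⟨wMinSet_subset_wEpsSet heps hU1 hU2 hy, hy.1⟩,
    wEpsSet_inter_subset_wEpsSet hU1⟩

theorem stmt_16 {n p : ℕ} (hn : 1 ≤ n) (hp : 2 ≤ p)
    (S : Set (EuclideanSpace ℝ (Fin n))) (hSne : S.Nonempty)
    (hSconv : Convex ℝ S) (hScomp : IsCompact S)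
    (f : EuclideanSpace ℝ (Fin n) → EuclideanSpace ℝ (Fin p)) (hfcont : Continuous f)
    (hfsqc : ∀ i, ∀ x1 ∈ S, ∀ x2 ∈ S, ∀ l : ℝ, 0 < l → l < 1 →
      f x1 i < f x2 i → f (l • x1 + (1 - l) • x2) i < f x2 i)
    (m M : EuclideanSpace ℝ (Fin p)) (hbox : ∀ x ∈ S, ∀ j, m j ≤ f x j ∧ f x j ≤ M j)
    (eps : ℝ) (heps : 0 ≤ eps)
    (U : Set (EuclideanSpace ℝ (Fin p)))
    -- `Y⋄ ⊆ U ⊆ Y⋄ + ϵ·B` with `B` the closed Euclidean unit ball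
    (hU1 : ({y : EuclideanSpace ℝ (Fin p) | ∃ x ∈ S, ∀ j, f x j ≤ y j} ∩
        {y : EuclideanSpace ℝ (Fin p) | ∀ j, y j ≤ M j}) ⊆ U)
    (hU2 : U ⊆ ({y : EuclideanSpace ℝ (Fin p) | ∃ x ∈ S, ∀ j, f x j ≤ y j} ∩
        {y : EuclideanSpace ℝ (Fin p) | ∀ j, y j ≤ M j}) + eps • Metric.closedBall (0 : EuclideanSpace ℝ (Fin p)) 1) :
    wMinSet ({y : EuclideanSpace ℝ (Fin p) | ∃ x ∈ S, ∀ j, f x j ≤ y j} ∩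
        {y : EuclideanSpace ℝ (Fin p) | ∀ j, y j ≤ M j}) ⊆
      wEpsSet eps U ∩ ({y : EuclideanSpace ℝ (Fin p) | ∃ x ∈ S, ∀ j, f x j ≤ y j} ∩
        {y : EuclideanSpace ℝ (Fin p) | ∀ j, y j ≤ M j}) ∧
    wEpsSet eps U ∩ ({y : EuclideanSpace ℝ (Fin p) | ∃ x ∈ S, ∀ j, f x j ≤ y j} ∩
        {y : EuclideanSpace ℝ (Fin p) | ∀ j, y j ≤ M j}) ⊆
      wEpsSet eps ({y : EuclideanSpace ℝ (Fin p) | ∃ x ∈ S, ∀ j, f x j ≤ y j} ∩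
        {y : EuclideanSpace ℝ (Fin p) | ∀ j, y j ≤ M j}) :=
  stmt_16_general S f M eps heps U hU1 hU2
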